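/- Let w₁ = (d₁¹,…,d_N¹) and w₂ = (d₁²,…,d_N²) with all entries positive, and let w = min(w₁,w₂) be defined componentwise by d_i = min(d_i¹, d_i²). If μ₁, μ₂, μ are the reflector measures of the discrete reflectors σ_{w₁}, σ_{w₂}, σ_w respectively, then μ(P_i) ≤ max(μ₁(P_i), μ₂(P_i)) for all 1 ≤ i ≤ N. -/

import Mathlib

noncomputable section

open MeasureTheory Metric Set Filter Topology
attribute [local instance] Classical.propDecidable

/-- Real inner product on `ℝ³`. -/
noncomputable def rinner (x y : EuclideanSpace ℝ (Fin 3)) : ℝ := inner ℝ x y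

/-- Euclidean 3-space. -/
abbrev E3 : Type := EuclideanSpace ℝ (Fin 3)

/-- The unit sphere `S²` in `ℝ³`. -/
def sphere2 : Set E3 := Metric.sphere (0 : E3) 1

/-- Unit vector `m = P/OP` in the direction of `P`. -/
noncomputable def axisDir (P : E3) : E3 := ‖P‖⁻¹ • P

/-- Eccentricity `ε = √(1 + d²/OP²) − d/OP` of the ellipsoid `E_d(P)`. -/
noncomputable def ecc (P : E3) (d : ℝ) : ℝ :=
  Real.sqrt (1 + d ^ 2 / ‖P‖ ^ 2) - d / ‖P‖

/-- Polar radius `ρ_d(x) = d/(1 − ε x·m)` of the ellipsoid `E_d(P)`. -/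
noncomputable def polarRadius (P : E3) (d : ℝ) (x : E3) : ℝ :=
  d / (1 - ecc P d * rinner x (axisDir P))

/-- The constant `c_δ = √(1 + δ²) − δ`. -/
noncomputable def cconst (δ : ℝ) : ℝ := Real.sqrt (1 + δ ^ 2) - δ

/-- Outer unit normal `(x − εm)/|x − εm|` of the ellipsoid `E_d(P)` at the point `ρ_d(x)x`. -/
noncomputable def normalVec (P : E3) (d : ℝ) (x : E3) : E3 :=
  ‖x - ecc P d • axisDir P‖⁻¹ • (x - ecc P d • axisDir P)

/-- The ellipsoid `E_d(P)` supports the surface `{ρ(x)x : x ∈ closure Ω}` at `ρ(x₀)x₀`. -/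
def IsSupportingAt (Ω : Set E3) (ρ : E3 → ℝ) (P : E3) (d : ℝ) (x₀ : E3) : Prop :=
  P ≠ 0 ∧ 0 < d ∧ (∀ x ∈ closure Ω, ρ x ≤ polarRadius P d x) ∧
    ρ x₀ = polarRadius P d x₀

/-- `{ρ(x)x : x ∈ closure Ω}` is a reflector from `closure Ω` to the target `D`. -/
def IsReflector (Ω D : Set E3) (ρ : E3 → ℝ) : Prop :=
  (∀ x ∈ closure Ω, 0 < ρ x) ∧
  ∀ x₀ ∈ closure Ω, ∃ P ∈ D, ∃ d : ℝ, IsSupportingAt Ω ρ P d x₀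

/-- Tracing set `τ_σ(E)`: directions reflected into `E`. -/
def tracing (Ω : Set E3) (ρ : E3 → ℝ) (E : Set E3) : Set E3 :=
  {x | x ∈ closure Ω ∧ ∃ P ∈ E, ∃ d : ℝ, IsSupportingAt Ω ρ P d x}

/-- The class `A(δ)`: reflectors all of whose points admit a supporting ellipsoid with
`d ≥ δ M`. -/
def InClassA (Ω D : Set E3) (ρ : E3 → ℝ) (δ M : ℝ) : Prop :=
  IsReflector Ω D ρ ∧
  ∀ x₀ ∈ closure Ω, ∃ P ∈ D, ∃ d : ℝ, δ * M ≤ d ∧ IsSupportingAt Ω ρ P d x₀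

/-- The boundary `∂Ω` of `Ω` relative to the sphere `S²`. -/
def sphFrontier (Ω : Set E3) : Set E3 := closure Ω ∩ closure (sphere2 \ Ω)

/-- `D` is contained in a plane of `ℝ³`. -/
def InPlane (D : Set E3) : Prop :=
  ∃ v : E3, v ≠ 0 ∧ ∃ c : ℝ, ∀ P ∈ D, rinner P v = c

/-- The set `S` of directions traced to two distinct target points. -/
def ambigSet (Ω D : Set E3) (ρ : E3 → ℝ) : Set E3 :=
  {x | x ∈ closure Ω ∧ ∃ P₁ ∈ D, ∃ P₂ ∈ D, P₁ ≠ P₂ ∧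
    x ∈ tracing Ω ρ {P₁} ∧ x ∈ tracing Ω ρ {P₂}}

/-- A canonical selection of the outer unit normal `ν(x)` of the reflector; at every point
where the supporting ellipsoid is unique (a.e. point) this is the normal of the
supporting ellipsoid. -/
noncomputable def nuSel (Ω D : Set E3) (ρ : E3 → ℝ) (x : E3) : E3 :=
  if h : ∃ p : E3 × ℝ, p.1 ∈ D ∧ IsSupportingAt Ω ρ p.1 p.2 x then
    normalVec h.choose.1 h.choose.2 x
  else 0

/-- A canonical selection of the reflector map `𝒩_σ(x)`; at every point with a unique
supporting ellipsoid (a.e. point) this is the target point the ray `x` is reflected to. -/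
noncomputable def reflMapSel (Ω D : Set E3) (ρ : E3 → ℝ) (x : E3) : E3 :=
  if h : ∃ p : E3 × ℝ, p.1 ∈ D ∧ IsSupportingAt Ω ρ p.1 p.2 x then h.choose.1 else 0

/-- The reflector measure `μ(E) = ∫_{τ_σ(E)} f(x) (x·ν(x))/ρ(x)² dx`,
the irradiance received on `E ⊆ D`. -/
noncomputable def reflMeasure (Ω D : Set E3) (ρ f : E3 → ℝ) (E : Set E3) : ℝ :=
  ∫ x in tracing Ω ρ E, f x * rinner x (nuSel Ω D ρ x) / ρ x ^ 2 ∂μH[2]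

/-- Polar radius of the discrete reflector given by `w = (d₁,…,d_N)`:
`ρ_w(x) = min_i ρ_{d_i}(x)`. -/
noncomputable def discRho {N : ℕ} (P : Fin N → E3) (w : Fin N → ℝ) (x : E3) : ℝ :=
  ⨅ i, polarRadius (P i) (w i) x

/-- Tracing set of the discrete reflector: directions reflected to some `P_i`, `i ∈ I`. -/
def discTracing {N : ℕ} (Ω : Set E3) (P : Fin N → E3) (w : Fin N → ℝ)
    (I : Set (Fin N)) : Set E3 :=
  {x | x ∈ closure Ω ∧ ∃ i ∈ I, discRho P w x = polarRadius (P i) (w i) x}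

/-- Canonical selection of the outer unit normal of the discrete reflector; at every
point where the minimum is attained at a unique `i` (a.e. point) it is the normal of
the supporting ellipsoid `E_{d_i}(P_i)`. -/
noncomputable def discNu {N : ℕ} (P : Fin N → E3) (w : Fin N → ℝ) (x : E3) : E3 :=
  if h : ∃ i, discRho P w x = polarRadius (P i) (w i) x then
    normalVec (P h.choose) (w h.choose) x
  else 0

/-- Reflector measure of the discrete reflector:
`μ_w({P_i : i ∈ I}) = ∫_{τ_{σ_w}(I)} f(x)(x·ν_w(x))/ρ_w(x)² dx`. -/
noncomputable def discMu {N : ℕ} (Ω : Set E3) (P : Fin N → E3) (w : Fin N → ℝ)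
    (f : E3 → ℝ) (I : Set (Fin N)) : ℝ :=
  ∫ x in discTracing Ω P w I, f x * rinner x (discNu P w x) / discRho P w x ^ 2 ∂μH[2]

/-!
Lower the weights `d_j` (`j ≠ i`) of a discrete reflector while keeping `d_i`. Since `ρ_d` is
increasing in `d`, the other ellipsoids only shrink, so fewer directions are reflected to `P_i`;
on those directions the integrand is that of the unchanged ellipsoid `E_{d_i}(P_i)`, and it is
nonnegative. Hence `μ_w(P_i) ≤ μ_u(P_i)` whenever `w ≤ u` and `w_i = u_i`; apply this with `u`
the one of `w₁, w₂` whose `i`-th entry is the smaller. The integrand is that of `E_{d_i}(P_i)`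
only away from ties between two ellipsoids, but ties lie on plane sections of the sphere, which
are `μH[2]`-null.
-/

lemma abs_sqrt_sq_add_sq_sub_le (y y' b : ℝ) :
    |√(y' ^ 2 + b ^ 2) - √(y ^ 2 + b ^ 2)| ≤ |y' - y| := by
  rw [← Complex.norm_add_mul_I, ← Complex.norm_add_mul_I]
  refine (abs_norm_sub_norm_le _ _).trans_eq ?_
  rw [add_sub_add_right_eq_sub, ← Complex.ofReal_sub, Complex.norm_real, Real.norm_eq_abs]

lemma lt_sqrt_one_add_sq (t : ℝ) : t < √(1 + t ^ 2) :=
  (le_abs_self t).trans_lt <| by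
    rw [← Real.sqrt_sq_eq_abs]; exact Real.sqrt_lt_sqrt (sq_nonneg t) (by linarith)

/-- A sphere meets a plane in a circle, the image of `ℝ` under a smooth map. -/
lemma dimH_sphere_inter_hyperplane_le_one {E : Type*} [NormedAddCommGroup E]
    [InnerProductSpace ℝ E] [Fact (Module.finrank ℝ E = 2 + 1)] {v : E} (hv : v ≠ 0) (R c : ℝ) :
    dimH {x : E | ‖x‖ = R ∧ inner ℝ x v = c} ≤ 1 := by
  set K := (ℝ ∙ v)ᗮ
  let ι : K ≃ₗᵢ[ℝ] ℂ := (OrthonormalBasis.fromOrthogonalSpanSingleton 2 hv).repr.trans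
    Complex.orthonormalBasisOneI.repr.symm
  let L : ℂ →L[ℝ] E := K.subtypeL ∘L ι.symm.toContinuousLinearEquiv.toContinuousLinearMap
  set x₀ : E := (c / ‖v‖ ^ 2) • v
  set r : ℝ := √(R ^ 2 - ‖x₀‖ ^ 2)
  have hK {x : E} (hx : inner ℝ x v = c) : inner ℝ v (x - x₀) = 0 := by
    rw [inner_sub_right, real_inner_smul_right, real_inner_self_eq_norm_sq, real_inner_comm, hx]
    field_simp
    ring
  have hr {x : E} (hx : ‖x‖ = R ∧ inner ℝ x v = c) : ‖x - x₀‖ = r := by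
    have hpyth := norm_add_sq_eq_norm_sq_add_norm_sq_real
      (by rw [real_inner_smul_left, hK hx.2, mul_zero] : inner ℝ x₀ (x - x₀) = 0)
    rw [add_sub_cancel, hx.1] at hpyth
    change ‖x - x₀‖ = √(R ^ 2 - ‖x₀‖ ^ 2)
    rw [show R ^ 2 - ‖x₀‖ ^ 2 = ‖x - x₀‖ ^ 2 by nlinarith, Real.sqrt_sq (norm_nonneg _)]
  have hcover : {x : E | ‖x‖ = R ∧ inner ℝ x v = c} ⊆
      range fun t : ℝ => x₀ + L (r * Complex.exp (t * Complex.I)) := by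
    intro x hx
    set z := ι ⟨x - x₀, Submodule.mem_orthogonal_singleton_iff_inner_right.2 (hK hx.2)⟩
    have hz : ‖z‖ = r := by rw [LinearIsometryEquiv.norm_map]; exact hr hx
    refine ⟨z.arg, ?_⟩
    change x₀ + L (r * Complex.exp (z.arg * Complex.I)) = x
    rw [← hz, Complex.norm_mul_exp_arg_mul_I]
    simp [z, L]
  have hsmooth : ContDiff ℝ 1 fun t : ℝ => x₀ + L (r * Complex.exp (t * Complex.I)) :=
    contDiff_const.add <| L.contDiff.comp <| contDiff_const.mul <|
      (Complex.ofRealCLM.contDiff.mul contDiff_const).cexp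
  calc dimH {x : E | ‖x‖ = R ∧ inner ℝ x v = c} ≤ dimH (range _) := dimH_mono hcover
    _ ≤ Module.finrank ℝ ℝ := hsmooth.dimH_range_le
    _ = 1 := by simp

lemma ecc_eq (P : E3) (d : ℝ) : ecc P d = √(1 + (d / ‖P‖) ^ 2) - d / ‖P‖ := by
  rw [ecc, div_pow]

lemma ecc_pos (P : E3) (d : ℝ) : 0 < ecc P d :=
  (ecc_eq P d).symm ▸ sub_pos.2 (lt_sqrt_one_add_sq _)

lemma inv_ecc (P : E3) (d : ℝ) : (ecc P d)⁻¹ = √(1 + (d / ‖P‖) ^ 2) + d / ‖P‖ := by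
  have hs : √(1 + (d / ‖P‖) ^ 2) ^ 2 = 1 + (d / ‖P‖) ^ 2 := Real.sq_sqrt (by positivity)
  rw [inv_eq_of_mul_eq_one_right]
  rw [ecc_eq]
  linear_combination hs

lemma inv_ecc_sub_ecc (P : E3) (d : ℝ) : (ecc P d)⁻¹ - ecc P d = 2 * d / ‖P‖ := by
  rw [inv_ecc, ecc_eq]
  ring

lemma ecc_lt_one {P : E3} (hP : P ≠ 0) {d : ℝ} (hd : 0 < d) : ecc P d < 1 := by
  have h := inv_ecc_sub_ecc P d
  have hε := ecc_pos P d
  have : 0 < (ecc P d)⁻¹ - ecc P d := h ▸ by positivity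
  by_contra! h1
  have : (ecc P d)⁻¹ ≤ 1 := inv_le_one_of_one_le₀ h1
  linarith

lemma ecc_div_eq (P : E3) {d : ℝ} (hd : 0 < d) :
    ecc P d / d = √(d⁻¹ ^ 2 + ‖P‖⁻¹ ^ 2) - ‖P‖⁻¹ := by
  have h : 1 + d ^ 2 / ‖P‖ ^ 2 = d ^ 2 * (d⁻¹ ^ 2 + ‖P‖⁻¹ ^ 2) := by
    field_simp
  rw [ecc, h, Real.sqrt_mul (by positivity), Real.sqrt_sq hd.le]
  field_simp

lemma norm_axisDir {P : E3} (hP : P ≠ 0) : ‖axisDir P‖ = 1 := by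
  rw [axisDir, norm_smul, norm_inv, norm_norm, inv_mul_cancel₀ (norm_ne_zero_iff.2 hP)]

lemma norm_smul_axisDir (P : E3) : ‖P‖ • axisDir P = P := by
  rcases eq_or_ne P 0 with rfl | hP
  · simp [axisDir]
  · rw [axisDir, smul_inv_smul₀ (norm_ne_zero_iff.2 hP)]

lemma abs_rinner_axisDir_le {P x : E3} (hP : P ≠ 0) (hx : ‖x‖ = 1) :
    |rinner x (axisDir P)| ≤ 1 := by
  simpa [rinner, hx, norm_axisDir hP] using abs_real_inner_le_norm x (axisDir P)

section PolarRadius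

variable {P x : E3} {d d' : ℝ}

lemma one_sub_ecc_mul_pos (hP : P ≠ 0) (hd : 0 < d) (hx : ‖x‖ = 1) :
    0 < 1 - ecc P d * rinner x (axisDir P) := by
  have hs := abs_le.1 (abs_rinner_axisDir_le hP hx)
  nlinarith [ecc_pos P d, ecc_lt_one hP hd]

lemma polarRadius_pos (hP : P ≠ 0) (hd : 0 < d) (hx : ‖x‖ = 1) : 0 < polarRadius P d x :=
  div_pos hd (one_sub_ecc_mul_pos hP hd hx)

lemma inv_polarRadius (hd : 0 < d) : (polarRadius P d x)⁻¹ =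
    d⁻¹ - rinner x (axisDir P) * (√(d⁻¹ ^ 2 + ‖P‖⁻¹ ^ 2) - ‖P‖⁻¹) := by
  rw [polarRadius, inv_div, ← ecc_div_eq P hd]
  field_simp

lemma inv_polarRadius_le (hP : P ≠ 0) (hd : 0 < d) (hx : ‖x‖ = 1) :
    (polarRadius P d x)⁻¹ ≤ 2 / d := by
  have hs := abs_le.1 (abs_rinner_axisDir_le hP hx)
  rw [polarRadius, inv_div]
  gcongr
  nlinarith [ecc_pos P d, ecc_lt_one hP hd]

/-- By `inv_polarRadius`, `1/ρ_d(x)` is `1/d` minus `x·m` times a `1`-Lipschitz function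
of `1/d`, and `|x·m| ≤ 1`. -/
lemma polarRadius_le_polarRadius (hP : P ≠ 0) (hx : ‖x‖ = 1) (hd' : 0 < d') (hdd : d' ≤ d) :
    polarRadius P d' x ≤ polarRadius P d x := by
  have hd := hd'.trans_le hdd
  rw [← inv_le_inv₀ (polarRadius_pos hP hd hx) (polarRadius_pos hP hd' hx),
    inv_polarRadius hd, inv_polarRadius hd']
  have hinv : d⁻¹ ≤ d'⁻¹ := inv_anti₀ hd' hdd
  have hlip := abs_le.1 (abs_sqrt_sq_add_sq_sub_le d⁻¹ d'⁻¹ ‖P‖⁻¹)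
  have hs := abs_le.1 (abs_rinner_axisDir_le hP hx)
  rw [abs_of_nonneg (sub_nonneg.2 hinv)] at hlip
  nlinarith [mul_nonneg (sub_nonneg.2 hs.2) (neg_le_iff_add_nonneg.1 hlip.1),
    mul_nonneg (neg_le_iff_add_nonneg'.1 hs.1) (sub_nonneg.2 hlip.2)]

end PolarRadius

section Normal

variable {P x : E3} {d : ℝ}

lemma rinner_normalVec_nonneg (hP : P ≠ 0) (hd : 0 < d) (hx : ‖x‖ = 1) :
    0 ≤ rinner x (normalVec P d x) := by
  have h := one_sub_ecc_mul_pos hP hd hx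
  rw [rinner] at h ⊢
  rw [normalVec, real_inner_smul_right, inner_sub_right, real_inner_smul_right,
    real_inner_self_eq_norm_sq, hx, one_pow]
  positivity

lemma abs_rinner_normalVec_le (P : E3) (d : ℝ) (hx : ‖x‖ = 1) :
    |rinner x (normalVec P d x)| ≤ 1 := by
  have hν : ‖normalVec P d x‖ ≤ 1 := by
    rw [normalVec, norm_smul, norm_inv, norm_norm]
    exact inv_mul_le_one
  simpa [rinner, hx] using (abs_real_inner_le_norm x _).trans (by rwa [hx, one_mul])

end Normal

lemma eq_of_ecc_smul_axisDir_eq {Q Q' : E3} (hQ : Q ≠ 0) (hQ' : Q' ≠ 0) {d : ℝ} (hd : 0 < d)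
    (h : ecc Q d • axisDir Q = ecc Q' d • axisDir Q') : Q = Q' := by
  have hε : ecc Q d = ecc Q' d := by
    simpa [norm_smul, norm_axisDir hQ, norm_axisDir hQ', abs_of_pos (ecc_pos _ _)]
      using congrArg norm h
  have hnorm : ‖Q‖ = ‖Q'‖ := by
    have h2 := inv_ecc_sub_ecc Q d
    rw [hε, inv_ecc_sub_ecc Q' d, div_eq_div_iff (norm_ne_zero_iff.2 hQ')
      (norm_ne_zero_iff.2 hQ), mul_right_inj' (by positivity)] at h2
    exact h2
  have hm : axisDir Q = axisDir Q' := smul_right_injective E3 (ecc_pos Q' d).ne' (hε ▸ h)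
  rw [← norm_smul_axisDir Q, ← norm_smul_axisDir Q', hnorm, hm]

/-- Cleared of denominators, the equation between the radii of `E_d(Q)` and `E_{d'}(Q')` is
linear in `x`, so two distinct ellipsoids can only tie along a plane section of the sphere. -/
lemma ae_polarRadius_ne {Q Q' : E3} (hQ : Q ≠ 0) (hQ' : Q' ≠ 0) (hne : Q ≠ Q')
    {d d' : ℝ} (hd : 0 < d) (hd' : 0 < d') :
    ∀ᵐ x ∂μH[2], ‖x‖ = 1 → polarRadius Q d x ≠ polarRadius Q' d' x := by
  have : Fact (Module.finrank ℝ E3 = 2 + 1) := ⟨finrank_euclideanSpace_fin⟩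
  set v : E3 := d • (ecc Q' d' • axisDir Q') - d' • (ecc Q d • axisDir Q)
  have hsub : {x : E3 | ‖x‖ = 1 ∧ polarRadius Q d x = polarRadius Q' d' x} ⊆
      {x | ‖x‖ = 1 ∧ inner ℝ x v = d - d'} := by
    rintro x ⟨hx, heq⟩
    refine ⟨hx, ?_⟩
    rw [polarRadius, polarRadius, div_eq_div_iff (one_sub_ecc_mul_pos hQ hd hx).ne'
      (one_sub_ecc_mul_pos hQ' hd' hx).ne'] at heq
    simp only [v, rinner, inner_sub_right, real_inner_smul_right] at heq ⊢
    linarith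
  have hnull : μH[2] {x : E3 | ‖x‖ = 1 ∧ inner ℝ x v = d - d'} = 0 := by
    by_cases hv : v = 0
    · have hdd : d ≠ d' := by
        rintro rfl
        exact hne (eq_of_ecc_smul_axisDir_eq hQ hQ' hd
          (smul_right_injective E3 hd.ne' (sub_eq_zero.1 hv)).symm)
      convert measure_empty (μ := μH[2])
      refine eq_empty_of_forall_notMem fun x hx => hdd (sub_eq_zero.1 ?_)
      simpa [hv] using hx.2.symm
    · simpa using hausdorffMeasure_of_dimH_lt (d := 2)
        ((dimH_sphere_inter_hyperplane_le_one hv 1 _).trans_lt (by norm_num))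
  exact (measure_eq_zero_iff_ae_notMem.1 (measure_mono_null hsub hnull)).mono
    fun x hx h1 h2 => hx ⟨h1, h2⟩

lemma measurable_polarRadius (P : E3) (d : ℝ) : Measurable (polarRadius P d) := by
  unfold polarRadius rinner
  fun_prop

lemma measurable_rinner_normalVec (P : E3) (d : ℝ) :
    Measurable fun x => rinner x (normalVec P d x) := by
  unfold normalVec rinner
  fun_prop

def ellipsoidDensity (f : E3 → ℝ) (P : E3) (d : ℝ) (x : E3) : ℝ :=
  f x * rinner x (normalVec P d x) / polarRadius P d x ^ 2

section EllipsoidDensity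

variable {f : E3 → ℝ} {P x : E3} {d : ℝ}

lemma ellipsoidDensity_nonneg (hP : P ≠ 0) (hd : 0 < d) (hx : ‖x‖ = 1) (hf : 0 ≤ f x) :
    0 ≤ ellipsoidDensity f P d x :=
  div_nonneg (mul_nonneg hf (rinner_normalVec_nonneg hP hd hx)) (sq_nonneg _)

lemma integrableOn_ellipsoidDensity {S : Set E3} (hS : MeasurableSet S) (hS1 : S ⊆ sphere2)
    (hP : P ≠ 0) (hd : 0 < d) (hf : IntegrableOn f S μH[2]) :
    IntegrableOn (ellipsoidDensity f P d) S μH[2] := by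
  have hmeas : Measurable fun x => rinner x (normalVec P d x) / polarRadius P d x ^ 2 :=
    (measurable_rinner_normalVec P d).div ((measurable_polarRadius P d).pow_const 2)
  have hbound : ∀ᵐ x ∂(μH[2].restrict S),
      ‖rinner x (normalVec P d x) / polarRadius P d x ^ 2‖ ≤ (2 / d) ^ 2 := by
    refine ae_restrict_of_forall_mem hS fun x hx => ?_
    have hx1 : ‖x‖ = 1 := mem_sphere_zero_iff_norm.1 (hS1 hx)
    rw [Real.norm_eq_abs, abs_div, abs_of_pos (pow_pos (polarRadius_pos hP hd hx1) 2),
      div_eq_mul_inv, ← inv_pow, ← one_mul ((2 / d) ^ 2)]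
    gcongr
    · exact abs_rinner_normalVec_le P d hx1
    · exact inv_nonneg.2 (polarRadius_pos hP hd hx1).le
    · exact inv_polarRadius_le hP hd hx1
  refine (hf.bdd_mul hmeas.aestronglyMeasurable hbound).congr (ae_of_all _ fun x => ?_)
  simp only [ellipsoidDensity]
  ring

end EllipsoidDensity

lemma norm_eq_one_of_mem_closure {Ω : Set E3} (hΩ : Ω ⊆ sphere2) {x : E3} (hx : x ∈ closure Ω) :
    ‖x‖ = 1 :=
  mem_sphere_zero_iff_norm.1 (closure_minimal hΩ isClosed_sphere hx)

section Discrete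

variable {N : ℕ} {Ω : Set E3} {P : Fin N → E3} {w u : Fin N → ℝ} {i : Fin N} {x : E3}

lemma discRho_le (P : Fin N → E3) (w : Fin N → ℝ) (x : E3) (j : Fin N) :
    discRho P w x ≤ polarRadius (P j) (w j) x :=
  ciInf_le (finite_range _).bddBelow j

lemma discRho_eq_iff :
    discRho P w x = polarRadius (P i) (w i) x ↔
      ∀ j, polarRadius (P i) (w i) x ≤ polarRadius (P j) (w j) x := by
  have : Nonempty (Fin N) := ⟨i⟩
  refine ⟨fun h j => h ▸ discRho_le P w x j, fun h => ?_⟩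
  exact (discRho_le P w x i).antisymm (le_ciInf h)

lemma measurable_discRho (P : Fin N → E3) (w : Fin N → ℝ) : Measurable (discRho P w) :=
  Measurable.iInf fun j => measurable_polarRadius (P j) (w j)

lemma mem_discTracing_singleton :
    x ∈ discTracing Ω P w {i} ↔ x ∈ closure Ω ∧ discRho P w x = polarRadius (P i) (w i) x := by
  simp [discTracing]

lemma measurableSet_discTracing (Ω : Set E3) (P : Fin N → E3) (w : Fin N → ℝ)
    (I : Set (Fin N)) : MeasurableSet (discTracing Ω P w I) := by
  have h : discTracing Ω P w I =
      closure Ω ∩ ⋃ j ∈ I, {x | discRho P w x = polarRadius (P j) (w j) x} := by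
    ext x
    simp [discTracing]
  rw [h]
  exact isClosed_closure.measurableSet.inter <| .biUnion I.to_countable fun j _ =>
    measurableSet_eq_fun (measurable_discRho P w) (measurable_polarRadius _ _)

lemma discTracing_subset (hΩ : Ω ⊆ sphere2) (hP : ∀ j, P j ≠ 0) (hw : ∀ j, 0 < w j)
    (hwu : ∀ j, w j ≤ u j) (hi : w i = u i) :
    discTracing Ω P w {i} ⊆ discTracing Ω P u {i} := by
  intro x hx
  rw [mem_discTracing_singleton, discRho_eq_iff] at hx ⊢
  refine ⟨hx.1, fun j => ?_⟩
  have hx1 : ‖x‖ = 1 := norm_eq_one_of_mem_closure hΩ hx.1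
  calc polarRadius (P i) (u i) x = polarRadius (P i) (w i) x := by rw [hi]
    _ ≤ polarRadius (P j) (w j) x := hx.2 j
    _ ≤ polarRadius (P j) (u j) x := polarRadius_le_polarRadius (hP j) hx1 (hw j) (hwu j)

lemma discNu_eq_of_forall_ne (h : discRho P w x = polarRadius (P i) (w i) x)
    (hne : ∀ j ≠ i, polarRadius (P i) (w i) x ≠ polarRadius (P j) (w j) x) :
    discNu P w x = normalVec (P i) (w i) x := by
  have hex : ∃ j, discRho P w x = polarRadius (P j) (w j) x := ⟨i, h⟩
  rw [discNu, dif_pos hex]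
  by_contra hij
  exact hne _ (fun h' => hij (by rw [h'])) (h.symm.trans hex.choose_spec)

lemma ae_discNu_eq (hΩ : Ω ⊆ sphere2) (hP : ∀ j, P j ≠ 0) (hPinj : Function.Injective P)
    (hw : ∀ j, 0 < w j) :
    ∀ᵐ x ∂μH[2], x ∈ discTracing Ω P w {i} → discNu P w x = normalVec (P i) (w i) x := by
  have hties : ∀ᵐ x ∂μH[2], ∀ j, j ≠ i → ‖x‖ = 1 →
      polarRadius (P i) (w i) x ≠ polarRadius (P j) (w j) x := by
    refine ae_all_iff.2 fun j => ?_
    by_cases hj : j = i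
    · exact ae_of_all _ fun _ hji => absurd hj hji
    · exact (ae_polarRadius_ne (hP i) (hP j) (hPinj.ne (Ne.symm hj)) (hw i) (hw j)).mono
        fun _ hx _ => hx
  filter_upwards [hties] with x hx hxT
  rw [mem_discTracing_singleton] at hxT
  have hx1 : ‖x‖ = 1 := norm_eq_one_of_mem_closure hΩ hxT.1
  exact discNu_eq_of_forall_ne hxT.2 fun j hj => hx j hj hx1

lemma discMu_singleton_eq (hΩ : Ω ⊆ sphere2) (hP : ∀ j, P j ≠ 0)
    (hPinj : Function.Injective P) (hw : ∀ j, 0 < w j) (f : E3 → ℝ) :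
    discMu Ω P w f {i} = ∫ x in discTracing Ω P w {i}, ellipsoidDensity f (P i) (w i) x ∂μH[2] := by
  refine setIntegral_congr_ae (measurableSet_discTracing Ω P w {i}) ?_
  filter_upwards [ae_discNu_eq hΩ hP hPinj hw] with x hx hxT
  rw [ellipsoidDensity, hx hxT, (mem_discTracing_singleton.1 hxT).2]

lemma discMu_singleton_le (hΩ : Ω ⊆ sphere2) (hP : ∀ j, P j ≠ 0)
    (hPinj : Function.Injective P) (hw : ∀ j, 0 < w j) (hwu : ∀ j, w j ≤ u j) (hi : w i = u i)
    {f : E3 → ℝ} (hf0 : ∀ x ∈ closure Ω, 0 ≤ f x) (hfi : IntegrableOn f (closure Ω) μH[2]) :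
    discMu Ω P w f {i} ≤ discMu Ω P u f {i} := by
  have hu j : 0 < u j := (hw j).trans_le (hwu j)
  have hTu : discTracing Ω P u {i} ⊆ closure Ω := fun x hx => (mem_discTracing_singleton.1 hx).1
  rw [discMu_singleton_eq hΩ hP hPinj hw, discMu_singleton_eq hΩ hP hPinj hu, hi]
  refine setIntegral_mono_set ?_ ?_ (ae_of_all _ (discTracing_subset hΩ hP hw hwu hi))
  · exact (integrableOn_ellipsoidDensity isClosed_closure.measurableSet
      (closure_minimal hΩ isClosed_sphere) (hP i) (hu i) hfi).mono_set hTu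
  · exact ae_restrict_of_forall_mem (measurableSet_discTracing Ω P u {i}) fun x hx =>
      ellipsoidDensity_nonneg (hP i) (hu i) (norm_eq_one_of_mem_closure hΩ (hTu hx))
        (hf0 x (hTu hx))

end Discrete

theorem discrete_measure_of_min_le_max_general
    (Ω : Set E3) (hΩ : Ω ⊆ sphere2)
    (N : ℕ) (P : Fin N → E3) (hP : ∀ i, P i ≠ 0) (hPinj : Function.Injective P)
    (w₁ w₂ : Fin N → ℝ) (hw₁ : ∀ i, 0 < w₁ i) (hw₂ : ∀ i, 0 < w₂ i)
    (f : E3 → ℝ) (hf0 : ∀ x ∈ closure Ω, 0 ≤ f x)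
    (hfi : IntegrableOn f (closure Ω) μH[2]) :
    ∀ i, discMu Ω P (fun j => min (w₁ j) (w₂ j)) f {i} ≤
      max (discMu Ω P w₁ f {i}) (discMu Ω P w₂ f {i}) := by
  intro i
  have hw j : 0 < min (w₁ j) (w₂ j) := lt_min (hw₁ j) (hw₂ j)
  rcases le_total (w₁ i) (w₂ i) with h | h
  · exact le_max_of_le_left <| discMu_singleton_le hΩ hP hPinj hw (fun j => min_le_left _ _)
      (min_eq_left h) hf0 hfi
  · exact le_max_of_le_right <| discMu_singleton_le hΩ hP hPinj hw (fun j => min_le_right _ _)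
      (min_eq_right h) hf0 hfi

/-- If `w = min(w₁,w₂)` componentwise, then the reflector measure of
`σ_w` at each `P_i` is at most the maximum of the measures of `σ_{w₁}` and `σ_{w₂}`. -/
theorem discrete_measure_of_min_le_max
    (Ω : Set E3) (hΩ : Ω ⊆ sphere2) (hfr : μH[2] (sphFrontier Ω) = 0)
    (N : ℕ) (P : Fin N → E3) (hP : ∀ i, P i ≠ 0) (hPinj : Function.Injective P)
    (w₁ w₂ : Fin N → ℝ) (hw₁ : ∀ i, 0 < w₁ i) (hw₂ : ∀ i, 0 < w₂ i)
    (f : E3 → ℝ) (hf0 : ∀ x ∈ closure Ω, 0 ≤ f x)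
    (hfi : IntegrableOn f (closure Ω) μH[2]) :
    ∀ i, discMu Ω P (fun j => min (w₁ j) (w₂ j)) f {i} ≤
      max (discMu Ω P w₁ f {i}) (discMu Ω P w₂ f {i}) :=
  discrete_measure_of_min_le_max_general Ω hΩ N P hP hPinj w₁ w₂ hw₁ hw₂ f hf0 hfi
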